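/- Let C and D be locally small cocomplete categories and (F, G) : C ⇄ D an adjoint pair of functors (F left adjoint to G) such that G preserves sequential direct limits. Suppose X is a set of morphisms of C such that the source of every morphism in X is small with respect to the class G(LLP(RLP(F(X)))). Then the set F(X) = {F(f) : f ∈ X} of morphisms of D permits the small object argument. -/

import Mathlib

open CategoryTheory Limits

universe v u

namespace Paper

variable {C : Type u} [Category.{v} C]

/-- `f` is a retract of `g` in the arrow category. -/
def IsRetract {A B X Y : C} (f : A ⟶ B) (g : X ⟶ Y) : Prop :=
  ∃ (h : A ⟶ X) (l : X ⟶ A) (p : B ⟶ Y) (q : Y ⟶ B),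
    h ≫ l = 𝟙 A ∧ p ≫ q = 𝟙 B ∧ h ≫ g = f ≫ p ∧ g ≫ q = l ≫ f

/-- The class of morphisms having the right lifting property against all members of `T`. -/
def rlp (T : MorphismProperty C) : MorphismProperty C :=
  fun _ _ g => ∀ ⦃A B : C⦄ (f : A ⟶ B), T f → HasLiftingProperty f g

/-- The class of morphisms having the left lifting property against all members of `T`. -/
def llp (T : MorphismProperty C) : MorphismProperty C :=
  fun _ _ f => ∀ ⦃X Y : C⦄ (g : X ⟶ Y), T g → HasLiftingProperty f g

/-- The morphism property determined by a set of arrows. -/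
def ofArrows (S : Set (Arrow C)) : MorphismProperty C :=
  fun _ _ f => Arrow.mk f ∈ S

/-- An object `A` is small with respect to a class `T` of morphisms if `Hom(A, -)`
preserves colimits of `ℕ`-indexed sequences of morphisms belonging to `T`. -/
def IsSmallWrt (T : MorphismProperty C) (A : C) : Prop :=
  ∀ (F : ℕ ⥤ C), (∀ n : ℕ, T (F.map (homOfLE (Nat.le_succ n)))) →
    ∀ (c : Cocone F), Nonempty (IsColimit c) →
      Nonempty (IsColimit ((coyoneda.obj (Opposite.op A)).mapCocone c))

/-- A set of morphisms permits the small object argument if the source of each of its members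
is small with respect to `llp (rlp S)`. -/
def PermitsSOA (S : Set (Arrow C)) : Prop :=
  ∀ a ∈ S, IsSmallWrt (llp (rlp (ofArrows S))) a.left

/-- A model structure on a category: distinguished classes of weak equivalences, fibrations and
cofibrations on a bicomplete category, satisfying the lifting, retract, two-out-of-three and
factorization axioms. -/
structure ModelStructure (C : Type u) [Category.{v} C] where
  hasLimits : HasLimits C
  hasColimits : HasColimits C
  W : MorphismProperty C
  Fib : MorphismProperty C
  Cof : MorphismProperty C
  lifting_left : ∀ {A B X Y : C} (f : A ⟶ B) (g : X ⟶ Y),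
    Cof f → W f → Fib g → HasLiftingProperty f g
  lifting_right : ∀ {A B X Y : C} (f : A ⟶ B) (g : X ⟶ Y),
    Cof f → Fib g → W g → HasLiftingProperty f g
  retract_fib : ∀ {A B X Y : C} {f : A ⟶ B} {g : X ⟶ Y}, IsRetract f g → Fib g → Fib f
  retract_cof : ∀ {A B X Y : C} {f : A ⟶ B} {g : X ⟶ Y}, IsRetract f g → Cof g → Cof f
  retract_w : ∀ {A B X Y : C} {f : A ⟶ B} {g : X ⟶ Y}, IsRetract f g → W g → W f
  two_three_comp : ∀ {A B Z : C} (f : A ⟶ B) (g : B ⟶ Z), W f → W g → W (f ≫ g)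
  two_three_left : ∀ {A B Z : C} (f : A ⟶ B) (g : B ⟶ Z), W (f ≫ g) → W g → W f
  two_three_right : ∀ {A B Z : C} (f : A ⟶ B) (g : B ⟶ Z), W (f ≫ g) → W f → W g
  factor_trivCof_fib : ∀ {A B : C} (f : A ⟶ B), ∃ (Z : C) (i : A ⟶ Z) (p : Z ⟶ B),
    Cof i ∧ W i ∧ Fib p ∧ i ≫ p = f
  factor_cof_trivFib : ∀ {A B : C} (f : A ⟶ B), ∃ (Z : C) (i : A ⟶ Z) (p : Z ⟶ B),
    Cof i ∧ Fib p ∧ W p ∧ i ≫ p = f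

/-- A model structure is cofibrantly generated by sets `I`, `J` of morphisms if both permit the
small object argument, `rlp I` is the class of trivial fibrations and `rlp J` the class of
fibrations. -/
structure IsCofibrantlyGenerated (M : ModelStructure C) (I J : Set (Arrow C)) : Prop where
  permits_I : PermitsSOA I
  permits_J : PermitsSOA J
  rlp_I : ∀ {X Y : C} (g : X ⟶ Y), rlp (ofArrows I) g ↔ (M.Fib g ∧ M.W g)
  rlp_J : ∀ {X Y : C} (g : X ⟶ Y), rlp (ofArrows J) g ↔ M.Fib g

end Paper
namespace Paper

open CategoryTheory Limits

variable {C : Type u} {D : Type v} [Category.{w} C] [Category.{w'} D]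

/-- The image of a class of morphisms of `D` under a functor `G : D ⥤ C`. -/
def strictImage (G : D ⥤ C) (T : MorphismProperty D) : MorphismProperty C :=
  fun X Y f => ∃ (A B : D) (g : A ⟶ B) (hA : G.obj A = X) (hB : G.obj B = Y),
    T g ∧ f = eqToHom hA.symm ≫ G.map g ≫ eqToHom hB

/-- The image of a set of arrows of `C` under a functor `F : C ⥤ D`. -/
def arrowImage (F : C ⥤ D) (S : Set (Arrow C)) : Set (Arrow D) :=
  (fun a : Arrow C => Arrow.mk (F.map a.hom)) '' S

end Paper

universe u₁ u₂ v₁ v₂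

/-! Maps `A → G Y` correspond naturally to maps `F A → Y`, so `Hom(F A, -)` on a sequential colimit
in `D` is `Hom(A, -)` on its image under `G`; that image is again a sequential colimit, whose
transition maps lie in `G(T)`. -/

namespace Paper

variable {C : Type u₁} {D : Type u₂} [Category.{v₁} C] [Category.{v₂} D] {F : C ⥤ D} {G : D ⥤ C}

theorem strictImage_map (T : MorphismProperty D) {A B : D} {g : A ⟶ B} (hg : T g) :
    strictImage G T (G.map g) :=
  ⟨A, B, g, rfl, rfl, hg, by simp⟩

-- The two hom functors take values in different universes, so they are compared after `ULift`.
def coyonedaObjCompUliftIso (adj : F ⊣ G) (A : C) :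
    coyoneda.obj (Opposite.op (F.obj A)) ⋙ uliftFunctor.{v₁} ≅
      G ⋙ coyoneda.obj (Opposite.op A) ⋙ uliftFunctor.{v₂} :=
  NatIso.ofComponents
    (fun Y => (Equiv.ulift.trans ((adj.homEquiv A Y).trans Equiv.ulift.symm)).toIso)
    (fun f => by ext ⟨g⟩; exact congrArg ULift.up (adj.homEquiv_naturality_right g f))

noncomputable def isColimitCoyonedaObjMapCocone (adj : F ⊣ G) {J : Type*} [Category J]
    {K : J ⥤ D} {c : Cocone K} (A : C)
    (h : IsColimit ((coyoneda.obj (Opposite.op A)).mapCocone (G.mapCocone c))) :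
    IsColimit ((coyoneda.obj (Opposite.op (F.obj A))).mapCocone c) :=
  isColimitOfReflects uliftFunctor.{v₁}
    ((isColimitOfPreserves uliftFunctor.{v₂} h).mapCoconeEquiv
      (coyonedaObjCompUliftIso adj A).symm)

theorem isSmallWrt_obj_of_adjunction (adj : F ⊣ G) [PreservesColimitsOfShape ℕ G]
    {T : MorphismProperty D} {A : C} (hA : IsSmallWrt (strictImage G T) A) :
    IsSmallWrt T (F.obj A) := by
  intro K hK c ⟨hc⟩
  have hKG : ∀ n : ℕ, strictImage G T ((K ⋙ G).map (homOfLE (Nat.le_succ n))) :=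
    fun n => strictImage_map T (hK n)
  obtain ⟨hcG⟩ := hA (K ⋙ G) hKG (G.mapCocone c) ⟨isColimitOfPreserves G hc⟩
  exact ⟨isColimitCoyonedaObjMapCocone adj A hcG⟩

end Paper

open CategoryTheory Limits Paper in
theorem statement4_general {C : Type u₁} {D : Type u₂} [Category.{v₁} C] [Category.{v₂} D]
    (F : C ⥤ D) (G : D ⥤ C) (adj : F ⊣ G) [PreservesColimitsOfShape ℕ G]
    (X : Set (Arrow C))
    (hX : ∀ a ∈ X, IsSmallWrt (strictImage G (llp (rlp (ofArrows (arrowImage F X))))) a.left) :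
    PermitsSOA (arrowImage F X) := by
  rintro _ ⟨x, hx, rfl⟩
  exact isSmallWrt_obj_of_adjunction adj (hX x hx)

open CategoryTheory Limits Paper in
/-- **Lemma 2.10.** Let `C`, `D` be locally small cocomplete categories and `(F, G) : C ⇄ D`
an adjoint pair such that `G` preserves sequential direct limits. If `X` is a set of morphisms
of `C` such that the source of every morphism of `X` is small with respect to the class
`G (LLP (RLP (F X)))`, then `F X` permits the small object argument. -/
theorem statement4 {C : Type u₁} {D : Type u₂} [Category.{v₁} C] [Category.{v₂} D]
    [HasColimits C] [HasColimits D]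
    (F : C ⥤ D) (G : D ⥤ C) (adj : F ⊣ G) [PreservesColimitsOfShape ℕ G]
    (X : Set (Arrow C))
    (hX : ∀ a ∈ X, IsSmallWrt (strictImage G (llp (rlp (ofArrows (arrowImage F X))))) a.left) :
    PermitsSOA (arrowImage F X) :=
  statement4_general F G adj X hX
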